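/- arXiv:2409.16832 — 5 statements merged into one kernel-verified Lean document; each statement's English description precedes it below -/
import Mathlib

section
/- Let S be a finite nonempty set and N, D : S → ℝ with D(a) > 0 for all a. Define γ* = min over a in S of N(a)/D(a). Then for any γ ∈ ℝ, min over a of (N(a) − γ·D(a)) = 0 if and only if γ = γ*. -/
/-! Positivity of `D a` makes `0 ≤ N a - γ * D a` equivalent to `γ ≤ N a / D a`, and
`N a - γ * D a ≤ 0` equivalent to `N a / D a ≤ γ`. Taking the first for every `a` gives
`0 ≤ min_a (N a - γ D a) ↔ γ ≤ γ*`, the second for some `a` gives `min_a (N a - γ D a) ≤ 0 ↔ γ* ≤ γ`. -/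

section Dinkelbach

variable {𝕜 ι : Type*} [Field 𝕜] [LinearOrder 𝕜] [IsStrictOrderedRing 𝕜]

theorem sub_mul_nonneg_iff_le_div {n d γ : 𝕜} (hd : 0 < d) : 0 ≤ n - γ * d ↔ γ ≤ n / d := by
  rw [le_div_iff₀ hd, sub_nonneg]

theorem sub_mul_nonpos_iff_div_le {n d γ : 𝕜} (hd : 0 < d) : n - γ * d ≤ 0 ↔ n / d ≤ γ := by
  rw [div_le_iff₀ hd, sub_nonpos]

variable {s : Finset ι} (hs : s.Nonempty) {N D : ι → 𝕜} (γ : 𝕜)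

theorem Finset.nonneg_inf'_sub_mul_iff (hD : ∀ a ∈ s, 0 < D a) :
    0 ≤ s.inf' hs (fun a => N a - γ * D a) ↔ γ ≤ s.inf' hs (fun a => N a / D a) := by
  simp only [Finset.le_inf'_iff]
  exact forall₂_congr fun a ha => sub_mul_nonneg_iff_le_div (hD a ha)

theorem Finset.inf'_sub_mul_nonpos_iff (hD : ∀ a ∈ s, 0 < D a) :
    s.inf' hs (fun a => N a - γ * D a) ≤ 0 ↔ s.inf' hs (fun a => N a / D a) ≤ γ := by
  simp only [Finset.inf'_le_iff]
  exact exists_congr fun a => and_congr_right fun ha => sub_mul_nonpos_iff_div_le (hD a ha)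

end Dinkelbach

/-- Dinkelbach equivalence: the optimal ratio value γ* is the unique root of
F(γ) = min_a (N(a) − γ·D(a)). -/
theorem dinkelbach_root_iff {S : Type*} [Fintype S] [Nonempty S]
    (N D : S → ℝ) (hD : ∀ a, 0 < D a) (γ : ℝ) :
    Finset.univ.inf' Finset.univ_nonempty (fun a => N a - γ * D a) = 0 ↔
      γ = Finset.univ.inf' Finset.univ_nonempty (fun a => N a / D a) := by
  have hD' : ∀ a ∈ Finset.univ, 0 < D a := fun a _ => hD a
  rw [le_antisymm_iff, le_antisymm_iff, Finset.inf'_sub_mul_nonpos_iff _ _ hD',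
    Finset.nonneg_inf'_sub_mul_iff _ _ hD', and_comm]
end

section
/- Let S be a finite nonempty set and N, D : S → ℝ with D(a) > 0 for all a. Let γ* = min_a N(a)/D(a). Suppose γ ≥ γ*, let a* be a minimizer of N(a) − γ·D(a) over S, and define γ' = N(a*)/D(a*). Then γ* ≤ γ' ≤ γ. -/
/-! Since `D > 0`, `N a / D a ≤ γ` is equivalent to `N a - γ * D a ≤ 0`. A minimizer of the ratio
has ratio `≤ γ`, so the Dinkelbach objective is nonpositive there, hence at its minimizer `a*`,
which therefore has ratio `≤ γ`. -/

theorem div_le_iff_sub_mul_nonpos {α : Type*} [Field α] [LinearOrder α] [IsStrictOrderedRing α]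
    {n d γ : α} (hd : 0 < d) : n / d ≤ γ ↔ n - γ * d ≤ 0 := by
  rw [div_le_iff₀ hd, sub_nonpos]

/-- Monotone decrease of the exact Dinkelbach iteration: if γ ≥ γ* and a* minimizes
N(a) − γ·D(a), then γ* ≤ N(a*)/D(a*) ≤ γ. -/
theorem dinkelbach_update_sandwich {S : Type*} [Fintype S] [Nonempty S]
    (N D : S → ℝ) (hD : ∀ a, 0 < D a) (γ : ℝ)
    (hγ : Finset.univ.inf' Finset.univ_nonempty (fun a => N a / D a) ≤ γ)
    (astar : S) (hmin : ∀ a, N astar - γ * D astar ≤ N a - γ * D a) :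
    Finset.univ.inf' Finset.univ_nonempty (fun a => N a / D a) ≤ N astar / D astar ∧
      N astar / D astar ≤ γ := by
  refine ⟨Finset.inf'_le _ (Finset.mem_univ astar), ?_⟩
  obtain ⟨a, -, ha⟩ := (Finset.inf'_le_iff _).1 hγ
  rw [div_le_iff_sub_mul_nonpos (hD astar)]
  exact (hmin a).trans ((div_le_iff_sub_mul_nonpos (hD a)).1 ha)
end

section
/- Let S be a finite nonempty set and N, D : S → ℝ with D(a) > 0 for all a, and let γ* = min_a N(a)/D(a). Define the Dinkelbach iteration: given γ_i > γ*, pick a minimizer a_i of N(a) − γ_i·D(a) and set γ_{i+1} = N(a_i)/D(a_i). Then γ_{i+1} − γ* ≤ (1 − D_min/D_max)·(γ_i − γ*), where D_min = min_a D(a) and D_max = max_a D(a). -/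
/-!
Let `a*` attain `γ* = min N/D`. Comparing the chosen action `aᵢ` with `a*` in the parametric
problem `min N - γᵢ D` gives `N(aᵢ) - γ* D(aᵢ) ≤ (γᵢ - γ*)(D(aᵢ) - D(a*))`, i.e.
`γᵢ₊₁ - γ* ≤ (1 - D(a*)/D(aᵢ))(γᵢ - γ*)`; the ratio `D(a*)/D(aᵢ)` is at least `D_min/D_max`.
-/

theorem ratio_sub_le_of_parametric_le {n d n' d' γ : ℝ} (hd : 0 < d) (hd' : 0 < d')
    (hle : n - γ * d ≤ n' - γ * d') :
    n / d - n' / d' ≤ (1 - d' / d) * (γ - n' / d') := by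
  have hn' : n' = n' / d' * d' := (div_mul_cancel₀ n' hd'.ne').symm
  have key : n - n' / d' * d ≤ (γ - n' / d') * (d - d') := by
    rw [hn'] at hle; linarith
  rw [sub_le_iff_le_add, div_le_iff₀ hd]
  calc n ≤ (γ - n' / d') * (d - d') + n' / d' * d := by linarith
    _ = ((1 - d' / d) * (γ - n' / d') + n' / d') * d := by field_simp

theorem one_sub_div_mul_le_one_sub_div_mul {d d' dmin dmax g : ℝ} (hdmin : 0 ≤ dmin)
    (hd : 0 < d) (hmin : dmin ≤ d') (hmax : d ≤ dmax) (hg : 0 ≤ g) :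
    (1 - d' / d) * g ≤ (1 - dmin / dmax) * g := by
  gcongr
  exact hdmin.trans hmin

/-- Linear convergence of the exact Dinkelbach iteration:
γ_{i+1} − γ* ≤ (1 − D_min/D_max)·(γ_i − γ*). -/
theorem dinkelbach_linear_convergence {S : Type*} [Fintype S] [Nonempty S]
    (N D : S → ℝ) (hD : ∀ a, 0 < D a)
    (γi : ℝ)
    (hγ : Finset.univ.inf' Finset.univ_nonempty (fun a => N a / D a) < γi)
    (ai : S) (hmin : ∀ a, N ai - γi * D ai ≤ N a - γi * D a) :
    N ai / D ai - Finset.univ.inf' Finset.univ_nonempty (fun a => N a / D a) ≤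
      (1 - (Finset.univ.inf' Finset.univ_nonempty D) /
           (Finset.univ.sup' Finset.univ_nonempty D)) *
        (γi - Finset.univ.inf' Finset.univ_nonempty (fun a => N a / D a)) := by
  obtain ⟨astar, -, hstar⟩ :=
    Finset.exists_mem_eq_inf' Finset.univ_nonempty (fun a => N a / D a)
  rw [hstar] at hγ ⊢
  calc N ai / D ai - N astar / D astar
      ≤ (1 - D astar / D ai) * (γi - N astar / D astar) :=
        ratio_sub_le_of_parametric_le (hD ai) (hD astar) (hmin astar)
    _ ≤ _ := one_sub_div_mul_le_one_sub_div_mul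
        ((Finset.lt_inf'_iff _).mpr fun a _ => hD a).le (hD ai)
        (Finset.inf'_le D (Finset.mem_univ astar)) (Finset.le_sup' D (Finset.mem_univ ai))
        (sub_nonneg.mpr hγ.le)
end

section
/- Let L : ℝⁿ → ℝⁿ be continuously differentiable with L(x*) = 0 and L'(x*) invertible. Consider the inexact Newton iteration x_{i+1} = x_i + s_i where L'(x_i) s_i = −L(x_i) + r_i with ‖r_i‖ ≤ η·‖L(x_i)‖ for a fixed η ∈ [0, 1). Then there exists a neighborhood U of x* and a norm such that for any x₀ ∈ U, the sequence x_i converges to x*, and ‖L(x_{i+1})‖ is eventually bounded by t·‖L(x_i)‖ for some t < 1. -/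
/-!
Let `A = L'(x*)` with `‖v‖ ≤ c ‖A v‖`, and work on a ball around `x*` on which `‖L' - A‖ ≤ ε`
with `c ε ≤ 1/2`. A perturbation of `A` by at most `ε` still satisfies the inverse bound with
constant `2c`; applied to `L'(x)` this bounds the step, `‖s‖ ≤ 2c(1+η)‖L x‖`, and applied to the
linearization of `L` at the root it bounds the error, `‖x - x*‖ ≤ 2c‖L x‖`. The mean value
theorem bounds the linearization error of a step by `2ε‖s‖`, whence
`‖L(x+s)‖ ≤ (η + 4c(1+η)ε)‖L x‖`. As the distance of the next iterate to `x*` is controlled by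
the decreasing quantity `‖L x‖`, the iterates never leave the ball, and `‖L x_i‖ → 0`
geometrically forces `x_i → x*`.
-/

open Filter Metric Topology

lemma norm_le_two_mul_of_norm_sub_le {E F : Type*} [NormedAddCommGroup E] [NormedAddCommGroup F]
    {v : E} {w u : F} {c ε : ℝ} (hc : 0 ≤ c) (hcε : c * ε ≤ 1 / 2)
    (hv : ‖v‖ ≤ c * ‖w‖) (hwu : ‖w - u‖ ≤ ε * ‖v‖) : ‖v‖ ≤ 2 * c * ‖u‖ := by
  have hw : ‖w‖ ≤ ‖u‖ + ε * ‖v‖ := (norm_le_norm_add_norm_sub' w u).trans (by gcongr)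
  nlinarith [mul_le_mul_of_nonneg_left hw hc, norm_nonneg v]

section InexactNewton

variable {E : Type*} [NormedAddCommGroup E] [NormedSpace ℝ E]
  {L : E → E} {A : E →L[ℝ] E} {xstar x s r : E} {c ε η R : ℝ}

lemma norm_sub_root_le (hc : 0 ≤ c) (hA : ∀ v, ‖v‖ ≤ c * ‖A v‖) (hcε : c * ε ≤ 1 / 2)
    (hdiff : ∀ y ∈ closedBall xstar R, DifferentiableAt ℝ L y)
    (hnear : ∀ y ∈ closedBall xstar R, ‖fderiv ℝ L y - A‖ ≤ ε)
    (hroot : L xstar = 0) (hx : x ∈ closedBall xstar R) :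
    ‖x - xstar‖ ≤ 2 * c * ‖L x‖ := by
  have hlin := (convex_closedBall xstar R).norm_image_sub_le_of_norm_fderiv_le' hdiff hnear
    (mem_closedBall_self (dist_nonneg.trans hx)) hx
  rw [hroot, sub_zero, norm_sub_rev] at hlin
  exact norm_le_two_mul_of_norm_sub_le hc hcε (hA _) hlin

lemma norm_step_le (hc : 0 ≤ c) (hA : ∀ v, ‖v‖ ≤ c * ‖A v‖) (hcε : c * ε ≤ 1 / 2)
    (hnear : ‖fderiv ℝ L x - A‖ ≤ ε) (hs : fderiv ℝ L x s = -L x + r)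
    (hr : ‖r‖ ≤ η * ‖L x‖) :
    ‖s‖ ≤ 2 * c * (1 + η) * ‖L x‖ := by
  have hpert : ‖A s - fderiv ℝ L x s‖ ≤ ε * ‖s‖ := by
    rw [norm_sub_rev, ← sub_apply]
    exact (fderiv ℝ L x - A).le_of_opNorm_le hnear s
  calc ‖s‖ ≤ 2 * c * ‖-L x + r‖ := hs ▸ norm_le_two_mul_of_norm_sub_le hc hcε (hA s) hpert
    _ ≤ 2 * c * (‖L x‖ + η * ‖L x‖) := by
      gcongr
      exact (norm_add_le _ _).trans (by rw [norm_neg]; gcongr)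
    _ = 2 * c * (1 + η) * ‖L x‖ := by ring

lemma norm_image_add_step_le (hdiff : ∀ y ∈ closedBall xstar R, DifferentiableAt ℝ L y)
    (hnear : ∀ y ∈ closedBall xstar R, ‖fderiv ℝ L y - A‖ ≤ ε)
    (hx : x ∈ closedBall xstar R) (hxs : x + s ∈ closedBall xstar R)
    (hs : fderiv ℝ L x s = -L x + r) :
    ‖L (x + s)‖ ≤ ‖r‖ + 2 * ε * ‖s‖ := by
  have hnear_x : ∀ y ∈ closedBall xstar R, ‖fderiv ℝ L y - fderiv ℝ L x‖ ≤ 2 * ε := fun y hy =>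
    calc ‖fderiv ℝ L y - fderiv ℝ L x‖ ≤ ‖fderiv ℝ L y - A‖ + ‖A - fderiv ℝ L x‖ :=
          norm_sub_le_norm_sub_add_norm_sub _ _ _
      _ ≤ 2 * ε := by rw [norm_sub_rev A]; linarith [hnear y hy, hnear x hx]
  have hlin := (convex_closedBall xstar R).norm_image_sub_le_of_norm_fderiv_le' hdiff hnear_x
    hx hxs
  rw [add_sub_cancel_left, hs, sub_sub, add_neg_cancel_left] at hlin
  exact (norm_le_norm_add_norm_sub' _ _).trans (by gcongr)

lemma inexact_newton_step (hc : 0 ≤ c) (hA : ∀ v, ‖v‖ ≤ c * ‖A v‖) (hcε : c * ε ≤ 1 / 2)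
    (hdiff : ∀ y ∈ closedBall xstar R, DifferentiableAt ℝ L y)
    (hnear : ∀ y ∈ closedBall xstar R, ‖fderiv ℝ L y - A‖ ≤ ε) (hroot : L xstar = 0)
    (hx : x ∈ closedBall xstar R) (hLx : 2 * c * (2 + η) * ‖L x‖ ≤ R)
    (hs : fderiv ℝ L x s = -L x + r) (hr : ‖r‖ ≤ η * ‖L x‖) :
    x + s ∈ closedBall xstar R ∧ ‖L (x + s)‖ ≤ (η + 4 * c * (1 + η) * ε) * ‖L x‖ := by
  have hε : 0 ≤ ε := (norm_nonneg _).trans (hnear x hx)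
  have hstep := norm_step_le hc hA hcε (hnear x hx) hs hr
  have herr := norm_sub_root_le hc hA hcε hdiff hnear hroot hx
  have hxs : x + s ∈ closedBall xstar R := by
    rw [mem_closedBall, dist_eq_norm, add_sub_right_comm]
    linarith [norm_add_le (x - xstar) s]
  refine ⟨hxs, (norm_image_add_step_le hdiff hnear hx hxs hs).trans ?_⟩
  nlinarith [mul_le_mul_of_nonneg_left hstep (by positivity : 0 ≤ 2 * ε)]

theorem tendsto_of_inexact_newton (hc : 0 ≤ c) (hA : ∀ v, ‖v‖ ≤ c * ‖A v‖)
    (hcε : c * ε ≤ 1 / 2) (hdiff : ∀ y ∈ closedBall xstar R, DifferentiableAt ℝ L y)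
    (hnear : ∀ y ∈ closedBall xstar R, ‖fderiv ℝ L y - A‖ ≤ ε) (hroot : L xstar = 0)
    (hη : 0 ≤ η) {t : ℝ} (ht : η + 4 * c * (1 + η) * ε ≤ t) (ht1 : t < 1)
    {x s r : ℕ → E} (hx0 : x 0 ∈ closedBall xstar R) (hLx0 : 2 * c * (2 + η) * ‖L (x 0)‖ ≤ R)
    (hx : ∀ i, x (i + 1) = x i + s i) (hs : ∀ i, fderiv ℝ L (x i) (s i) = -L (x i) + r i)
    (hr : ∀ i, ‖r i‖ ≤ η * ‖L (x i)‖) :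
    Tendsto x atTop (𝓝 xstar) ∧ ∀ i, ‖L (x (i + 1))‖ ≤ t * ‖L (x i)‖ := by
  have hε : 0 ≤ ε := (norm_nonneg _).trans (hnear _ hx0)
  have ht0 : 0 ≤ t := le_trans (by positivity) ht
  have hstay : ∀ i, x i ∈ closedBall xstar R ∧ 2 * c * (2 + η) * ‖L (x i)‖ ≤ R := by
    intro i
    induction i with
    | zero => exact ⟨hx0, hLx0⟩
    | succ i ih =>
      obtain ⟨hxs, hLxs⟩ := inexact_newton_step hc hA hcε hdiff hnear hroot ih.1 ih.2 (hs i) (hr i)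
      rw [hx i]
      refine ⟨hxs, le_trans ?_ ih.2⟩
      gcongr
      exact hLxs.trans (mul_le_of_le_one_left (norm_nonneg _) (ht.trans ht1.le))
  have hcontr : ∀ i, ‖L (x (i + 1))‖ ≤ t * ‖L (x i)‖ := fun i => by
    rw [hx i]
    exact (inexact_newton_step hc hA hcε hdiff hnear hroot (hstay i).1 (hstay i).2 (hs i)
      (hr i)).2.trans (by gcongr)
  have hgeom : Tendsto (fun i => t ^ i * ‖L (x 0)‖) atTop (𝓝 0) := by
    simpa using (tendsto_pow_atTop_nhds_zero_of_lt_one ht0 ht1).mul_const ‖L (x 0)‖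
  have hL : Tendsto (fun i => 2 * c * ‖L (x i)‖) atTop (𝓝 0) := by
    simpa using (squeeze_zero (fun i => norm_nonneg (L (x i)))
      (fun i => le_geom (u := fun i => ‖L (x i)‖) ht0 i fun k _ => hcontr k) hgeom).const_mul
        (2 * c)
  refine ⟨tendsto_iff_norm_sub_tendsto_zero.mpr ?_, hcontr⟩
  exact squeeze_zero (fun _ => norm_nonneg _)
    (fun i => norm_sub_root_le hc hA hcε hdiff hnear hroot (hstay i).1) hL

end InexactNewton

/-- Inexact Newton convergence (Dembo–Eisenstat–Steihaug): if L is C¹ with a root x*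
at which the Jacobian is invertible, then for any forcing constant η ∈ [0,1) there is a
neighborhood U of x* and a rate t < 1 such that every inexact Newton sequence started
in U converges to x*, with ‖L(x_{i+1})‖ eventually bounded by t·‖L(x_i)‖. -/
theorem inexact_newton_convergence {n : ℕ}
    (L : EuclideanSpace ℝ (Fin n) → EuclideanSpace ℝ (Fin n))
    (hL : ContDiff ℝ 1 L)
    (xstar : EuclideanSpace ℝ (Fin n)) (hroot : L xstar = 0)
    (hinv : ∃ J : EuclideanSpace ℝ (Fin n) ≃L[ℝ] EuclideanSpace ℝ (Fin n),
      (J : EuclideanSpace ℝ (Fin n) →L[ℝ] EuclideanSpace ℝ (Fin n)) = fderiv ℝ L xstar)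
    (η : ℝ) (hη0 : 0 ≤ η) (hη1 : η < 1) :
    ∃ U ∈ nhds xstar, ∃ t : ℝ, t < 1 ∧
      ∀ x s r : ℕ → EuclideanSpace ℝ (Fin n),
        x 0 ∈ U →
        (∀ i, x (i + 1) = x i + s i) →
        (∀ i, fderiv ℝ L (x i) (s i) = -(L (x i)) + r i) →
        (∀ i, ‖r i‖ ≤ η * ‖L (x i)‖) →
        Tendsto x atTop (nhds xstar) ∧
          (∀ᶠ i in atTop, ‖L (x (i + 1))‖ ≤ t * ‖L (x i)‖) := by
  obtain ⟨J, hJ⟩ := hinv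
  set c : ℝ := ‖(J.symm : EuclideanSpace ℝ (Fin n) →L[ℝ] EuclideanSpace ℝ (Fin n))‖
  have hA : ∀ v, ‖v‖ ≤ c * ‖fderiv ℝ L xstar v‖ := fun v => by
    simpa [← hJ] using J.antilipschitz.le_mul_norm (map_zero J) v
  have hsmall : ∀ᶠ ε in 𝓝[>] (0 : ℝ), c * ε < 1 / 2 ∧ η + 4 * c * (1 + η) * ε < 1 :=
    nhdsWithin_le_nhds <|
      (ContinuousAt.eventually_lt (by fun_prop) continuousAt_const (by norm_num)).and
        (ContinuousAt.eventually_lt (by fun_prop) continuousAt_const (by simpa using hη1))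
  obtain ⟨ε, ⟨hcε, ht⟩, hε0⟩ := (hsmall.and self_mem_nhdsWithin).exists
  have hLc : Continuous L := hL.continuous
  have hL'c : Continuous (fderiv ℝ L) := hL.continuous_fderiv one_ne_zero
  have hnear : ∀ᶠ y in 𝓝 xstar, ‖fderiv ℝ L y - fderiv ℝ L xstar‖ < ε :=
    ContinuousAt.eventually_lt (by fun_prop) continuousAt_const (by simpa using hε0)
  obtain ⟨R, hR0, hR⟩ := nhds_basis_closedBall.eventually_iff.mp hnear
  have hLsmall : ∀ᶠ y in 𝓝 xstar, 2 * c * (2 + η) * ‖L y‖ < R :=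
    ContinuousAt.eventually_lt (by fun_prop) continuousAt_const (by simpa [hroot] using hR0)
  refine ⟨_, inter_mem (closedBall_mem_nhds xstar hR0) hLsmall, _, ht,
    fun x s r hx0 hx hs hr => ?_⟩
  obtain ⟨hlim, hcontr⟩ := tendsto_of_inexact_newton (by positivity) hA hcε.le
    (fun y _ => (hL.differentiable one_ne_zero).differentiableAt) (fun y hy => (hR hy).le) hroot
    hη0 le_rfl ht hx0.1 hx0.2.le hx hs hr
  exact ⟨hlim, Eventually.of_forall hcontr⟩
end

section
/- Let S be a finite nonempty set, N, D : S → ℝ with 0 < D_min ≤ D(a) and N(a) ≥ 0 for all a, and γ* = min_a N(a)/D(a). Suppose γ_i > γ* and let Q_i = min_a (N(a) − γ_i·D(a)) with minimizer a_i. Then Q_i < 0 and γ_i − N(a_i)/D(a_i) = −Q_i/D(a_i), hence γ_i − γ* ≥ −Q_i/D(a_i) > 0. -/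
/-!
Since γ* < γᵢ, some action `b` has `N b / D b < γᵢ`, i.e. `N b - γᵢ D b < 0`, so the Dinkelbach
value `Qᵢ` is negative. As `aᵢ` attains `Qᵢ`, dividing `Qᵢ = N aᵢ - γᵢ D aᵢ` by `D aᵢ > 0` gives
`γᵢ - N aᵢ / D aᵢ = -Qᵢ / D aᵢ`, and `γ* ≤ N aᵢ / D aᵢ` turns this into the lower bound on the gap.
-/

namespace Finset

variable {ι : Type*} {s : Finset ι} (hs : s.Nonempty)

theorem inf'_eq_of_forall_le {α : Type*} [LinearOrder α] {f : ι → α} {a : ι} (ha : a ∈ s)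
    (hmin : ∀ b ∈ s, f a ≤ f b) : s.inf' hs f = f a :=
  le_antisymm (inf'_le f ha) (le_inf' hs f hmin)

theorem inf'_sub_mul_neg_of_inf'_div_lt {K : Type*} [Field K] [LinearOrder K]
    [IsStrictOrderedRing K] {N D : ι → K} {γ : K} (hD : ∀ a ∈ s, 0 < D a)
    (hγ : s.inf' hs (fun a => N a / D a) < γ) : s.inf' hs (fun a => N a - γ * D a) < 0 := by
  obtain ⟨b, hb, hratio⟩ := (inf'_lt_iff hs).1 hγ
  refine (inf'_lt_iff hs).2 ⟨b, hb, ?_⟩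
  have := (div_lt_iff₀ (hD b hb)).1 hratio
  linarith

end Finset

theorem sub_div_eq_neg_sub_mul_div {K : Type*} [Field K] (γ n : K) {d : K} (hd : d ≠ 0) :
    γ - n / d = -(n - γ * d) / d := by
  field_simp
  ring

theorem fql_gap_bound_general {S : Type*} [Fintype S] [Nonempty S]
    (N D : S → ℝ) (Dmin : ℝ) (hDmin : 0 < Dmin) (hD : ∀ a, Dmin ≤ D a)
    (γi : ℝ)
    (hγ : Finset.univ.inf' Finset.univ_nonempty (fun a => N a / D a) < γi)
    (ai : S) (hmin : ∀ a, N ai - γi * D ai ≤ N a - γi * D a) :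
    Finset.univ.inf' Finset.univ_nonempty (fun a => N a - γi * D a) < 0 ∧
      γi - N ai / D ai =
        -(Finset.univ.inf' Finset.univ_nonempty (fun a => N a - γi * D a)) / D ai ∧
      -(Finset.univ.inf' Finset.univ_nonempty (fun a => N a - γi * D a)) / D ai ≤
        γi - Finset.univ.inf' Finset.univ_nonempty (fun a => N a / D a) ∧
      0 < -(Finset.univ.inf' Finset.univ_nonempty (fun a => N a - γi * D a)) / D ai := by
  have hDpos : ∀ a, 0 < D a := fun a => hDmin.trans_le (hD a)
  have hQ : Finset.univ.inf' Finset.univ_nonempty (fun a => N a - γi * D a)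
      = N ai - γi * D ai :=
    Finset.inf'_eq_of_forall_le _ (Finset.mem_univ ai) fun a _ => hmin a
  have hQneg := Finset.inf'_sub_mul_neg_of_inf'_div_lt Finset.univ_nonempty
    (fun a _ => hDpos a) hγ
  have hstep : γi - N ai / D ai =
      -(Finset.univ.inf' Finset.univ_nonempty (fun a => N a - γi * D a)) / D ai := by
    rw [hQ]
    exact sub_div_eq_neg_sub_mul_div γi (N ai) (hDpos ai).ne'
  refine ⟨hQneg, hstep, ?_, div_pos (neg_pos.2 hQneg) (hDpos ai)⟩
  rw [← hstep]
  exact sub_le_sub_left (Finset.inf'_le (fun a => N a / D a) (Finset.mem_univ ai)) γi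

/-- Quantitative gap relation in Fractional Q-Learning: if γ_i > γ* then
Q_i = min_a (N(a) − γ_i D(a)) < 0, the Dinkelbach step satisfies
γ_i − N(a_i)/D(a_i) = −Q_i/D(a_i), and hence γ_i − γ* ≥ −Q_i/D(a_i) > 0. -/
theorem fql_gap_bound {S : Type*} [Fintype S] [Nonempty S]
    (N D : S → ℝ) (Dmin : ℝ) (hDmin : 0 < Dmin) (hD : ∀ a, Dmin ≤ D a)
    (hN : ∀ a, 0 ≤ N a)
    (γi : ℝ)
    (hγ : Finset.univ.inf' Finset.univ_nonempty (fun a => N a / D a) < γi)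
    (ai : S) (hmin : ∀ a, N ai - γi * D ai ≤ N a - γi * D a) :
    Finset.univ.inf' Finset.univ_nonempty (fun a => N a - γi * D a) < 0 ∧
      γi - N ai / D ai =
        -(Finset.univ.inf' Finset.univ_nonempty (fun a => N a - γi * D a)) / D ai ∧
      -(Finset.univ.inf' Finset.univ_nonempty (fun a => N a - γi * D a)) / D ai ≤
        γi - Finset.univ.inf' Finset.univ_nonempty (fun a => N a / D a) ∧
      0 < -(Finset.univ.inf' Finset.univ_nonempty (fun a => N a - γi * D a)) / D ai :=
  fql_gap_bound_general N D Dmin hDmin hD γi hγ ai hmin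
end
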